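/- arXiv:1911.10765 — 2 statements merged into one kernel-verified Lean document; each statement's English description precedes it below -/
import Mathlib

section
/- Let M₁, M₂ be matroids on the same ground set U and suppose U contains k₁ disjoint sets independent in M₁ and k₂ disjoint sets independent in M₂, each of size r'. Let k = min(k₁,k₂). Then M₁ and M₂ have a common independent set of size at least 2r' − |U|/k. -/
open Classical

noncomputable section

structure FinMatroid (α : Type*) where
  Indep : Finset α → Prop
  empty_indep : Indep ∅
  subset_indep : ∀ ⦃A B : Finset α⦄, Indep A → B ⊆ A → Indep B
  exchange : ∀ ⦃A B : Finset α⦄, Indep A → Indep B → A.card < B.card →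
    ∃ b ∈ B \ A, Indep (insert b A)

variable {α : Type*} [DecidableEq α]

/-- The rank of a set `T`: the maximum cardinality of an independent subset of `T`. -/
def FinMatroid.rank (M : FinMatroid α) (T : Finset α) : ℕ :=
  (T.powerset.filter fun A => M.Indep A).sup Finset.card

/-!
By Edmonds' matroid intersection theorem (the inequality max ≥ min is all that is needed), some
common independent set has at least `r₁(A) + r₂(U ∖ A)` elements, for some `A ⊆ U`. It is proved
by induction on the ground set: an element `e` is deleted if the bound survives, and otherwise
contracted in both matroids, where submodularity of the ranks shows that the bound drops by
exactly one.

For every `A`, each of the `k₁` disjoint `M₁`-independent sets has at most `r₁(A)` elements in `A`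
and the rest in `U ∖ A`, so `k₁ r' ≤ k₁ r₁(A) + |U ∖ A|`; likewise `k₂ r' ≤ k₂ r₂(U ∖ A) + |A|`.
Dividing by `k₁, k₂ ≥ k` and adding gives `2 r' ≤ r₁(A) + r₂(U ∖ A) + |U| / k`.
-/
namespace FinMatroid

open Finset Function

-- A fresh type variable keeps the ambient `[DecidableEq α]` out of these lemmas: decidability is
-- classical throughout, as in the fields of `FinMatroid`.
variable {β : Type*} (M : FinMatroid β)

theorem card_le_rank {I T : Finset β} (hI : M.Indep I) (hIT : I ⊆ T) : I.card ≤ M.rank T :=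
  le_sup (mem_filter.2 ⟨mem_powerset.2 hIT, hI⟩)

theorem exists_indep_subset_card_eq_rank (T : Finset β) :
    ∃ I ⊆ T, M.Indep I ∧ I.card = M.rank T := by
  have hne : (T.powerset.filter M.Indep).Nonempty :=
    ⟨∅, mem_filter.2 ⟨empty_mem_powerset T, M.empty_indep⟩⟩
  obtain ⟨I, hI, hIT⟩ := exists_mem_eq_sup _ hne card
  rw [mem_filter, mem_powerset] at hI
  exact ⟨I, hI.1, hI.2, hIT.symm⟩

theorem rank_mono : Monotone M.rank := fun S T hST => by
  obtain ⟨I, hIS, hI, hIc⟩ := M.exists_indep_subset_card_eq_rank S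
  exact hIc ▸ M.card_le_rank hI (hIS.trans hST)

@[simp] theorem rank_empty : M.rank ∅ = 0 := by
  rw [rank]; simp

theorem exists_indep_superset_subset_union_card_eq {I J : Finset β} (hI : M.Indep I)
    (hJ : M.Indep J) (hIJ : I.card ≤ J.card) :
    ∃ K, I ⊆ K ∧ K ⊆ I ∪ J ∧ M.Indep K ∧ K.card = J.card := by
  induction hd : J.card - I.card generalizing I with
  | zero => exact ⟨I, subset_rfl, subset_union_left, hI, by omega⟩
  | succ d ih =>
    obtain ⟨b, hb, hbI⟩ := M.exchange hI hJ (by omega)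
    rw [mem_sdiff] at hb
    have hcard : (insert b I).card = I.card + 1 := card_insert_of_notMem hb.2
    obtain ⟨K, hIK, hKIJ, hK, hKc⟩ := ih hbI (by omega) (by omega)
    refine ⟨K, (subset_insert b I).trans hIK, hKIJ.trans ?_, hK, hKc⟩
    rw [insert_union, insert_eq_of_mem (mem_union_right I hb.1)]

theorem rank_union_add_rank_inter_le (A B : Finset β) :
    M.rank (A ∪ B) + M.rank (A ∩ B) ≤ M.rank A + M.rank B := by
  obtain ⟨I, hIAB, hI, hIc⟩ := M.exists_indep_subset_card_eq_rank (A ∩ B)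
  obtain ⟨J, hJAB, hJ, hJc⟩ := M.exists_indep_subset_card_eq_rank (A ∪ B)
  obtain ⟨K, hIK, hKIJ, hK, hKc⟩ := M.exists_indep_superset_subset_union_card_eq hI hJ
    (hIc ▸ hJc ▸ M.rank_mono inter_subset_union)
  have hKAB : K ⊆ A ∪ B := hKIJ.trans (union_subset (hIAB.trans inter_subset_union) hJAB)
  have hKA : (K ∩ A).card ≤ M.rank A :=
    M.card_le_rank (M.subset_indep hK inter_subset_left) inter_subset_right
  have hKB : (K ∩ B).card ≤ M.rank B :=
    M.card_le_rank (M.subset_indep hK inter_subset_left) inter_subset_right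
  -- `K` meets `A` and `B` in sets whose sizes add up to `|K| + |K ∩ A ∩ B| ≥ |K| + |I|`.
  have hsplit := card_union_add_card_inter (K ∩ A) (K ∩ B)
  rw [← inter_union_distrib_left, inter_eq_left.2 hKAB, ← inter_inter_distrib_left] at hsplit
  have hIKAB : I.card ≤ (K ∩ (A ∩ B)).card := card_le_card (subset_inter hIK hIAB)
  omega

theorem rank_sdiff_union_add_rank_sdiff_inter_le (E A B : Finset β) :
    M.rank (E \ (A ∪ B)) + M.rank (E \ (A ∩ B)) ≤ M.rank (E \ A) + M.rank (E \ B) := by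
  simpa only [sdiff_union_distrib, sdiff_inter_distrib_right, add_comm (M.rank (_ ∩ _))]
    using M.rank_union_add_rank_inter_le (E \ A) (E \ B)

theorem rank_insert_of_not_indep_singleton {e : β} (he : ¬ M.Indep {e}) (A : Finset β) :
    M.rank (insert e A) = M.rank A := by
  refine le_antisymm ?_ (M.rank_mono (subset_insert e A))
  obtain ⟨I, hIA, hI, hIc⟩ := M.exists_indep_subset_card_eq_rank (insert e A)
  have heI : e ∉ I := fun heI => he (M.subset_indep hI (singleton_subset_iff.2 heI))
  exact hIc ▸ M.card_le_rank hI ((subset_insert_iff_of_notMem heI).1 hIA)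

def contract (e : β) (he : M.Indep {e}) : FinMatroid β where
  Indep A := e ∉ A ∧ M.Indep (insert e A)
  empty_indep := ⟨notMem_empty e, he⟩
  subset_indep _ _ hA hBA :=
    ⟨fun heB => hA.1 (hBA heB), M.subset_indep hA.2 (insert_subset_insert e hBA)⟩
  exchange A B hA hB hAB := by
    obtain ⟨b, hb, hbA⟩ := M.exchange hA.2 hB.2 (by
      rwa [card_insert_of_notMem hA.1, card_insert_of_notMem hB.1, add_lt_add_iff_right])
    simp only [mem_sdiff, mem_insert, not_or] at hb
    obtain ⟨hbB | hbB, hbe, hbA'⟩ := hb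
    · exact absurd hbB hbe
    refine ⟨b, mem_sdiff.2 ⟨hbB, hbA'⟩, ?_, by rwa [insert_comm]⟩
    simp only [mem_insert, not_or]
    exact ⟨Ne.symm hbe, hA.1⟩

theorem rank_contract_add_one {e : β} (he : M.Indep {e}) (A : Finset β) :
    (M.contract e he).rank A + 1 = M.rank (insert e A) := by
  apply le_antisymm
  · obtain ⟨I, hIA, hI, hIc⟩ := (M.contract e he).exists_indep_subset_card_eq_rank A
    rw [← hIc, ← card_insert_of_notMem hI.1]
    exact M.card_le_rank hI.2 (insert_subset_insert e hIA)
  · obtain ⟨J, hJA, hJ, hJc⟩ := M.exists_indep_subset_card_eq_rank (insert e A)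
    have hJpos : ({e} : Finset β).card ≤ J.card :=
      hJc ▸ M.card_le_rank he (singleton_subset_iff.2 (mem_insert_self e A))
    obtain ⟨K, heK, hKJ, hK, hKc⟩ := M.exists_indep_superset_subset_union_card_eq he hJ hJpos
    have heK' : e ∈ K := singleton_subset_iff.1 heK
    have hKA : K.erase e ⊆ A := (erase_subset_erase e (hKJ.trans
      (union_subset (singleton_subset_iff.2 (mem_insert_self e A)) hJA))).trans
      (erase_insert_subset e A)
    have := (M.contract e he).card_le_rank ⟨notMem_erase e K, by rwa [insert_erase heK']⟩ hKA
    rw [card_erase_of_mem heK', hKc, hJc] at this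
    omega

variable {M₁ M₂ : FinMatroid β}

theorem lt_rank_insert_add_rank_sdiff {E A A₁ : Finset β} {e : β} {n : ℕ}
    (hE : ∀ X ⊆ E, n ≤ M₁.rank X + M₂.rank (E \ X)) (heA : e ∉ A) (heA₁ : e ∉ A₁)
    (hAE : insert e A ⊆ E) (hA₁E : insert e A₁ ⊆ E)
    (hA₁ : M₁.rank A₁ + M₂.rank (E \ insert e A₁) < n) :
    n < M₁.rank (insert e A) + M₂.rank (E \ A) := by
  -- Uncross `insert e A` with `A₁` in `M₁`, and `A` with `insert e A₁` in `M₂`: the two unions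
  -- coincide, and so do the two intersections.
  have h₁ := M₁.rank_union_add_rank_inter_le (insert e A) A₁
  have h₂ := M₂.rank_sdiff_union_add_rank_sdiff_inter_le E A (insert e A₁)
  rw [insert_union, ← union_insert, insert_inter_of_notMem heA₁,
    ← inter_insert_of_notMem heA] at h₁
  have h₃ := hE (A ∪ insert e A₁) (union_subset ((subset_insert e A).trans hAE) hA₁E)
  have h₄ := hE (A ∩ insert e A₁) (inter_subset_right.trans hA₁E)
  omega

theorem exists_common_indep_of_forall_le_rank_add_rank_sdiff (M₁ M₂ : FinMatroid β)
    {E : Finset β} {n : ℕ} (hE : ∀ A ⊆ E, n ≤ M₁.rank A + M₂.rank (E \ A)) :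
    ∃ T ⊆ E, M₁.Indep T ∧ M₂.Indep T ∧ n ≤ T.card := by
  induction E using Finset.induction_on generalizing M₁ M₂ n with
  | empty =>
    exact ⟨∅, subset_rfl, M₁.empty_indep, M₂.empty_indep, by simpa using hE ∅ subset_rfl⟩
  | insert e E heE ih =>
    -- Delete `e` if the bound survives on `E`. Otherwise a violating `A₁ ⊆ E` forces `e` to be a
    -- non-loop of both matroids, and `n - 1` bounds the rank sums of the two contractions by `e`.
    by_cases hE' : ∀ A ⊆ E, n ≤ M₁.rank A + M₂.rank (E \ A)
    · obtain ⟨T, hTE, hT⟩ := ih M₁ M₂ hE'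
      exact ⟨T, hTE.trans (subset_insert e E), hT⟩
    push Not at hE'
    obtain ⟨A₁, hA₁E, hA₁⟩ := hE'
    have heA₁ : e ∉ A₁ := fun h => heE (hA₁E h)
    have hsdiff : E \ A₁ = insert e E \ insert e A₁ := by
      rw [insert_sdiff_insert, sdiff_insert_of_notMem heE]
    rw [hsdiff] at hA₁
    have he₁ : M₁.Indep {e} := by
      by_contra he
      have := hE (insert e A₁) (insert_subset_insert e hA₁E)
      rw [M₁.rank_insert_of_not_indep_singleton he] at this
      omega
    have he₂ : M₂.Indep {e} := by
      by_contra he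
      have := hE A₁ (hA₁E.trans (subset_insert e E))
      rw [← insert_erase (mem_sdiff.2 ⟨mem_insert_self e E, heA₁⟩), ← sdiff_insert,
        M₂.rank_insert_of_not_indep_singleton he] at this
      omega
    obtain ⟨T, hTE, hT₁, hT₂, hT⟩ := ih (M₁.contract e he₁) (M₂.contract e he₂) (n := n - 1)
      fun A hAE => by
        have heA : e ∉ A := fun h => heE (hAE h)
        have := lt_rank_insert_add_rank_sdiff hE heA heA₁ (insert_subset_insert e hAE)
          (insert_subset_insert e hA₁E) hA₁
        rw [← M₁.rank_contract_add_one he₁, insert_sdiff_of_notMem _ heA,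
          ← M₂.rank_contract_add_one he₂] at this
        omega
    exact ⟨insert e T, insert_subset_insert e hTE, hT₁.2, hT₂.2,
      by rw [card_insert_of_notMem hT₁.1]; omega⟩

section Packing

variable [Fintype β] {ι : Type*} [Fintype ι] {I : ι → Finset β}

theorem sum_card_le_card_mul_rank_add_card_compl (hI : ∀ i, M.Indep (I i))
    (hdisj : Pairwise (Disjoint on I)) (A : Finset β) :
    ∑ i, (I i).card ≤ Fintype.card ι * M.rank A + Aᶜ.card := by
  have hdisj' : ((univ : Finset ι) : Set ι).PairwiseDisjoint fun i => I i \ A :=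
    fun i _ j _ hij => (hdisj hij).mono sdiff_subset sdiff_subset
  calc ∑ i, (I i).card = ∑ i, (I i ∩ A).card + (univ.biUnion fun i => I i \ A).card := by
        rw [card_biUnion hdisj', ← sum_add_distrib]
        simp only [card_inter_add_card_sdiff]
    _ ≤ Fintype.card ι * M.rank A + Aᶜ.card := by
        gcongr
        · simpa using sum_le_card_nsmul univ (fun i => (I i ∩ A).card) (M.rank A)
            fun i _ => M.card_le_rank (M.subset_indep (hI i) inter_subset_left) inter_subset_right
        · exact biUnion_subset.2 fun i _ x hx => mem_compl.2 (mem_sdiff.1 hx).2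

theorem le_rank_add_card_compl_div {r k : ℕ} (hI : ∀ i, M.Indep (I i))
    (hcard : ∀ i, (I i).card = r) (hdisj : Pairwise (Disjoint on I)) (hk : 0 < k)
    (hkι : k ≤ Fintype.card ι) (A : Finset β) :
    (r : ℝ) ≤ M.rank A + Aᶜ.card / k := by
  have hsum := M.sum_card_le_card_mul_rank_add_card_compl hI hdisj A
  simp only [hcard, sum_const, card_univ, smul_eq_mul] at hsum
  have hι : (0 : ℝ) < Fintype.card ι := by exact_mod_cast hk.trans_le hkι
  calc (r : ℝ) ≤ M.rank A + Aᶜ.card / Fintype.card ι := by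
        rw [← sub_le_iff_le_add', le_div_iff₀ hι]
        have : (Fintype.card ι * r : ℝ) ≤ Fintype.card ι * M.rank A + Aᶜ.card := by
          exact_mod_cast hsum
        linarith
    _ ≤ M.rank A + Aᶜ.card / k := by gcongr

end Packing

theorem two_mul_le_rank_add_rank_compl_add_card_div [Fintype β] {ι₁ ι₂ : Type*} [Fintype ι₁]
    [Fintype ι₂] {I₁ : ι₁ → Finset β} {I₂ : ι₂ → Finset β} {r k : ℕ} (hk : 0 < k)
    (hk₁ : k ≤ Fintype.card ι₁) (hI₁ : ∀ i, M₁.Indep (I₁ i)) (hI₁card : ∀ i, (I₁ i).card = r)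
    (hI₁disj : Pairwise (Disjoint on I₁))
    (hk₂ : k ≤ Fintype.card ι₂) (hI₂ : ∀ i, M₂.Indep (I₂ i)) (hI₂card : ∀ i, (I₂ i).card = r)
    (hI₂disj : Pairwise (Disjoint on I₂)) (A : Finset β) :
    2 * (r : ℝ) ≤ M₁.rank A + M₂.rank Aᶜ + Fintype.card β / k := by
  have h₁ := M₁.le_rank_add_card_compl_div hI₁ hI₁card hI₁disj hk hk₁ A
  have h₂ := M₂.le_rank_add_card_compl_div hI₂ hI₂card hI₂disj hk hk₂ Aᶜ
  have hU : (Aᶜ.card + Aᶜᶜ.card : ℝ) = Fintype.card β := by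
    rw [compl_compl]; exact_mod_cast card_compl_add_card A
  rw [← hU, add_div]
  linarith

theorem exists_common_indep_rank_add_rank_compl_le_card [Fintype β] (M₁ M₂ : FinMatroid β) :
    ∃ T, M₁.Indep T ∧ M₂.Indep T ∧ ∃ A, M₁.rank A + M₂.rank Aᶜ ≤ T.card := by
  obtain ⟨A, -, hA⟩ := exists_min_image univ (fun A => M₁.rank A + M₂.rank Aᶜ) univ_nonempty
  obtain ⟨T, -, hT₁, hT₂, hT⟩ := exists_common_indep_of_forall_le_rank_add_rank_sdiff M₁ M₂
    (E := univ) fun B _ => (compl_eq_univ_sdiff B) ▸ hA B (mem_univ B)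
  exact ⟨T, hT₁, hT₂, A, hT⟩

end FinMatroid

/-- If the ground set `U` contains `k₁` disjoint `M₁`-independent sets and `k₂` disjoint
`M₂`-independent sets, each of size `r'`, then `M₁` and `M₂` have a common independent set of
size at least `2r' − |U| / min(k₁, k₂)`. -/
theorem common_independent_from_packings [Fintype α] (M₁ M₂ : FinMatroid α)
    (k₁ k₂ r' : ℕ) (hk₁ : 0 < k₁) (hk₂ : 0 < k₂)
    (I1 : Fin k₁ → Finset α) (I2 : Fin k₂ → Finset α)
    (h1ind : ∀ i, M₁.Indep (I1 i)) (h1card : ∀ i, (I1 i).card = r')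
    (h1disj : ∀ i j, i ≠ j → Disjoint (I1 i) (I1 j))
    (h2ind : ∀ i, M₂.Indep (I2 i)) (h2card : ∀ i, (I2 i).card = r')
    (h2disj : ∀ i j, i ≠ j → Disjoint (I2 i) (I2 j)) :
    ∃ T : Finset α, M₁.Indep T ∧ M₂.Indep T ∧
      2 * (r' : ℝ) - (Fintype.card α : ℝ) / ((min k₁ k₂ : ℕ) : ℝ) ≤ (T.card : ℝ) := by
  obtain ⟨T, hT₁, hT₂, A, hAT⟩ :=
    FinMatroid.exists_common_indep_rank_add_rank_compl_le_card M₁ M₂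
  have hA := FinMatroid.two_mul_le_rank_add_rank_compl_add_card_div (lt_min hk₁ hk₂)
    (by simp) h1ind h1card (fun i j => h1disj i j)
    (by simp) h2ind h2card (fun i j => h2disj i j) A
  have hAT' := (Nat.cast_le (α := ℝ)).2 hAT
  push_cast at hAT'
  exact ⟨T, hT₁, hT₂, by linarith⟩
end
end

section
/- Let M₁, M₂ be matroids on V, S ∈ I₁ ∩ I₂, and let S' be obtained from S by augmenting along a shortest s–t path in the exchange graph G(S) (so S' ∈ I₁ ∩ I₂ with |S'| = |S| + 1). Then for every a ∈ V: if d_{G(S)}(s,a) ≥ d_{G(S)}(s,t), then d_{G(S')}(s,a) ≥ d_{G(S)}(s,t). -/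
open Classical

noncomputable section

variable {α : Type*} [DecidableEq α]

/-- Vertices of the exchange graph: a source `src`, a sink `snk`, and the ground elements. -/
inductive EGV (α : Type*) where
  | src : EGV α
  | snk : EGV α
  | el : α → EGV α

/-- Arcs of the exchange graph `G(S)` for `S ∈ I₁ ∩ I₂`. -/
def egAdj (M₁ M₂ : FinMatroid α) (S : Finset α) : EGV α → EGV α → Prop
  | EGV.src, EGV.el b => b ∉ S ∧ M₁.Indep (insert b S)
  | EGV.el b, EGV.snk => b ∉ S ∧ M₂.Indep (insert b S)
  | EGV.el x, EGV.el y =>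
      (x ∈ S ∧ y ∉ S ∧ M₁.Indep (insert y (S.erase x))) ∨
      (x ∉ S ∧ y ∈ S ∧ M₂.Indep (insert x (S.erase y)))
  | _, _ => False

/-- Directed shortest-path distance in the exchange graph (number of arcs), `⊤` if unreachable. -/
def egDist (M₁ M₂ : FinMatroid α) (S : Finset α) (u v : EGV α) : ℕ∞ :=
  sInf {n : ℕ∞ | ∃ l : List (EGV α),
    List.Chain' (egAdj M₁ M₂ S) (u :: (l ++ [v])) ∧ n = (l.length : ℕ∞) + 1}

/-- Elements at odd positions (1-indexed) of a list: `v₁, v₃, …` — these are the elements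
added by an augmentation. -/
def oddElems (l : List α) : Finset α :=
  ((l.zipIdx.filter fun p => p.2 % 2 == 0).map Prod.fst).toFinset

/-- Elements at even positions (1-indexed) of a list: `v₂, v₄, …` — these are the elements
removed by an augmentation. -/
def evenElems (l : List α) : Finset α :=
  ((l.zipIdx.filter fun p => p.2 % 2 == 1).map Prod.fst).toFinset

/-!
Let `a = |l|`, so `d_{G(S)}(s,t) = a + 1`. By induction on `k ≤ a`, every `b` with
`d_{G(S')}(s,b) ≤ k` has `d_{G(S)}(s,b) ≤ a`; the first part of the monotonicity lemma then
gives `d_{G(S)}(s,b) ≤ d_{G(S')}(s,b) ≤ k`. For the induction step take the last arc `u → b` of a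
shortest path in `G(S')`, where `u = s` or `d_{G(S)}(s,u) < a`. Unless `b` lies on the path, an
exchange argument in `M₁` (arcs out of `s` or out of `S'`) or in `M₂` (arcs into `S'`) turns it
into an arc of `G(S)` into `b` from `s`, from `u`, or from an element of `S ∆ S'`. Since the
path is shortest, `v_i` is at distance exactly `i` from `s`; so the `v_i` are distinct,
`|S'| = |S| + 1`, and every element of `S ∆ S'` other than `v_a` is at distance `< a`. In the `M₂`
case the exchange offers two possible tails, so `v_a` alone cannot block it.
-/

section Distance

variable {M₁ M₂ : FinMatroid α} {S : Finset α} {u v w : EGV α}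

lemma egDist_le_of_isChain {L : List (EGV α)}
    (h : List.IsChain (egAdj M₁ M₂ S) (u :: (L ++ [v]))) :
    egDist M₁ M₂ S u v ≤ L.length + 1 :=
  sInf_le ⟨L, h, rfl⟩

lemma one_le_egDist : 1 ≤ egDist M₁ M₂ S u v :=
  le_sInf <| by rintro _ ⟨L, -, rfl⟩; exact le_add_self

lemma exists_isChain_of_egDist_ne_top (h : egDist M₁ M₂ S u v ≠ ⊤) :
    ∃ L : List (EGV α), List.IsChain (egAdj M₁ M₂ S) (u :: (L ++ [v])) ∧
      egDist M₁ M₂ S u v = L.length + 1 := by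
  have hmem : egDist M₁ M₂ S u v ∈ {n : ℕ∞ | ∃ L : List (EGV α),
      List.IsChain (egAdj M₁ M₂ S) (u :: (L ++ [v])) ∧ n = L.length + 1} :=
    csInf_mem (Set.nonempty_iff_ne_empty.mpr fun hempty => h (by
      unfold egDist; exact hempty ▸ sInf_empty))
  exact hmem

lemma egDist_le_one_of_adj (h : egAdj M₁ M₂ S u v) : egDist M₁ M₂ S u v ≤ 1 := by
  simpa using egDist_le_of_isChain (L := []) (List.isChain_pair.mpr h)

lemma egDist_triangle :
    egDist M₁ M₂ S u w ≤ egDist M₁ M₂ S u v + egDist M₁ M₂ S v w := by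
  rcases eq_or_ne (egDist M₁ M₂ S u v) ⊤ with h₁ | h₁
  · simp [h₁]
  rcases eq_or_ne (egDist M₁ M₂ S v w) ⊤ with h₂ | h₂
  · simp [h₂]
  obtain ⟨L₁, hL₁, e₁⟩ := exists_isChain_of_egDist_ne_top h₁
  obtain ⟨L₂, hL₂, e₂⟩ := exists_isChain_of_egDist_ne_top h₂
  have hL : List.IsChain (egAdj M₁ M₂ S) (u :: ((L₁ ++ v :: L₂) ++ [w])) := by
    simpa using List.IsChain.append_overlap (l₁ := u :: L₁) (l₂ := [v]) (l₃ := L₂ ++ [w])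
      (by simpa using hL₁) hL₂ (List.cons_ne_nil _ _)
  calc egDist M₁ M₂ S u w ≤ (L₁ ++ v :: L₂).length + 1 := egDist_le_of_isChain hL
    _ = egDist M₁ M₂ S u v + egDist M₁ M₂ S v w := by
      rw [e₁, e₂]; push_cast [List.length_append, List.length_cons]; ring

lemma egDist_le_add_one_of_adj (h : egAdj M₁ M₂ S v w) :
    egDist M₁ M₂ S u w ≤ egDist M₁ M₂ S u v + 1 :=
  (egDist_triangle (v := v)).trans (by gcongr; exact egDist_le_one_of_adj h)

lemma adj_or_exists_adj_of_egDist_le {k : ℕ} (h : egDist M₁ M₂ S u v ≤ k + 1) :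
    egAdj M₁ M₂ S u v ∨ ∃ w, egDist M₁ M₂ S u w ≤ k ∧ egAdj M₁ M₂ S w v := by
  obtain ⟨L, hL, e⟩ := exists_isChain_of_egDist_ne_top (ne_top_of_le_ne_top (by simp) h)
  rcases L.eq_nil_or_concat' with rfl | ⟨L, w, rfl⟩
  · exact Or.inl (List.isChain_pair.mp hL)
  rw [← List.cons_append, List.isChain_append] at hL
  refine Or.inr ⟨w, (egDist_le_of_isChain hL.1).trans ?_,
    hL.2.2 w (by rw [← List.cons_append, List.getLast?_concat]; rfl) v rfl⟩
  rw [e, List.length_append, List.length_singleton] at h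
  have : L.length + 1 + 1 ≤ k + 1 := by exact_mod_cast h
  exact_mod_cast (by omega : L.length + 1 ≤ k)

end Distance

namespace FinMatroid

variable (M : FinMatroid α) {A B S T : Finset α} {y : α}

lemma exists_augment (hA : M.Indep A) (hB : M.Indep B) :
    ∃ C, A ⊆ C ∧ C ⊆ A ∪ B ∧ M.Indep C ∧ B.card ≤ C.card := by
  induction hn : B.card - A.card generalizing A with
  | zero => exact ⟨A, subset_rfl, Finset.subset_union_left, hA, by omega⟩
  | succ n ih =>
    obtain ⟨b, hb, hbA⟩ := M.exchange hA hB (by omega)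
    replace hb : b ∈ B ∧ b ∉ A := by simpa using hb
    obtain ⟨C, hAC, hCB, hC, hcard⟩ := ih (A := insert b A) (by convert hbA)
      (by rw [Finset.card_insert_of_notMem hb.2]; omega)
    refine ⟨C, (Finset.subset_insert b A).trans hAC, hCB.trans_eq ?_, hC, hcard⟩
    rw [Finset.insert_union, Finset.insert_eq_of_mem (Finset.mem_union_right _ hb.1)]

lemma indep_insert_or_exists_indep_insert_erase (hS : M.Indep S) (hT : M.Indep T)
    (hyT : y ∈ T) (hyS : y ∉ S) :
    M.Indep (insert y S) ∨ ∃ z ∈ S, z ∉ T ∧ M.Indep (insert y (S.erase z)) := by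
  obtain ⟨C, hyTC, hCS, hC, hcard⟩ := M.exists_augment
    (M.subset_indep hT (Finset.insert_subset hyT Finset.inter_subset_left) :
      M.Indep (insert y (T ∩ S))) hS
  by_cases hSC : S ⊆ C
  · exact Or.inl <| M.subset_indep hC <|
      Finset.insert_subset (hyTC (Finset.mem_insert_self _ _)) hSC
  obtain ⟨z, hzS, hzC⟩ := Finset.not_subset.mp hSC
  have hzT : z ∉ T := fun hzT =>
    hzC (hyTC (Finset.mem_insert_of_mem (Finset.mem_inter.mpr ⟨hzT, hzS⟩)))
  have hCsub : C ⊆ insert y (S.erase z) := fun x hx => by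
    have := hCS hx
    simp only [Finset.mem_union, Finset.mem_insert, Finset.mem_inter] at this
    simp only [Finset.mem_insert, Finset.mem_erase]
    rcases this with (rfl | ⟨-, hxS⟩) | hxS <;> first | exact Or.inl rfl |
      exact Or.inr ⟨by rintro rfl; exact hzC hx, hxS⟩
  have hcard' : (insert y (S.erase z)).card ≤ C.card := by
    rwa [Finset.card_insert_of_notMem (fun h => hyS (Finset.mem_of_mem_erase h)),
      Finset.card_erase_add_one hzS]
  exact Or.inr ⟨z, hzS, hzT, Finset.eq_of_subset_of_card_le hCsub hcard' ▸ hC⟩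

lemma exists_indep_insert_erase_ne (hS : M.Indep S) (hT : M.Indep T) (hyS : y ∈ S)
    (hyT : y ∉ T) (hcard : S.card < T.card) (w : α) :
    ∃ z ∈ T, z ∉ S ∧ z ≠ w ∧ M.Indep (insert z (S.erase y)) := by
  obtain ⟨C, hSC, hCT, hC, hcardC⟩ :=
    M.exists_augment (M.subset_indep hS (S.erase_subset y)) hT
  have htwo : 1 < (C \ S.erase y).card := by
    rw [Finset.card_sdiff_of_subset hSC]
    have := Finset.card_erase_add_one hyS
    omega
  obtain ⟨z, hz, hzw⟩ := Finset.exists_mem_ne htwo w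
  rw [Finset.mem_sdiff] at hz
  have hzT : z ∈ T := (Finset.mem_union.mp (hCT hz.1)).resolve_left hz.2
  refine ⟨z, hzT, fun hzS => hz.2 (Finset.mem_erase.mpr ⟨?_, hzS⟩), hzw,
    M.subset_indep hC (Finset.insert_subset hz.1 hSC)⟩
  rintro rfl
  exact hyT hzT

end FinMatroid

section ExchangeGraph

variable {M₁ M₂ : FinMatroid α} {S T : Finset α} {b : α} {n : ℕ∞}

lemma egDist_src_le_of_indep₁ (hS₁ : M₁.Indep S) (hbS : b ∉ S) (hT : M₁.Indep T)
    (hbT : b ∈ T)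
    (hnear : ∀ z ∈ S, z ∉ T → egDist M₁ M₂ S .src (.el z) ≤ n) :
    egDist M₁ M₂ S .src (.el b) ≤ n + 1 := by
  rcases M₁.indep_insert_or_exists_indep_insert_erase hS₁ hT hbT hbS with
    h | ⟨z, hzS, hzT, h⟩
  · have hadj : egAdj M₁ M₂ S .src (.el b) := ⟨hbS, h⟩
    exact (egDist_le_one_of_adj hadj).trans le_add_self
  · calc egDist M₁ M₂ S .src (.el b) ≤ egDist M₁ M₂ S .src (.el z) + 1 :=
          egDist_le_add_one_of_adj (Or.inl ⟨hzS, hbS, h⟩)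
      _ ≤ n + 1 := by gcongr; exact hnear z hzS hzT

lemma egDist_src_le_of_indep₂ (hS₂ : M₂.Indep S) (hbS : b ∈ S) (hT : M₂.Indep T)
    (hbT : b ∉ T)
    (hcard : S.card < T.card) (w : α)
    (hnear : ∀ z ∈ T, z ∉ S → z ≠ w → egDist M₁ M₂ S .src (.el z) ≤ n) :
    egDist M₁ M₂ S .src (.el b) ≤ n + 1 := by
  obtain ⟨z, hzT, hzS, hzw, h⟩ := M₂.exists_indep_insert_erase_ne hS₂ hT hbS hbT hcard w
  calc egDist M₁ M₂ S .src (.el b) ≤ egDist M₁ M₂ S .src (.el z) + 1 :=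
        egDist_le_add_one_of_adj (Or.inr ⟨hzS, hbS, h⟩)
    _ ≤ n + 1 := by gcongr; exact hnear z hzT hzS hzw

end ExchangeGraph

lemma length_filter_zipIdx_mod_two_eq_zero {β : Type*} (l : List β) :
    (l.zipIdx.filter fun p => p.2 % 2 == 0).length = (l.length + 1) / 2 := by
  induction l using List.reverseRecOn with
  | nil => simp
  | append_singleton l a ih =>
    rw [List.zipIdx_append, List.filter_append, List.length_append, ih]
    rcases Nat.mod_two_eq_zero_or_one l.length with h | h <;> simp [h] <;> omega

lemma length_filter_zipIdx_mod_two_eq_one {β : Type*} (l : List β) :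
    (l.zipIdx.filter fun p => p.2 % 2 == 1).length = l.length / 2 := by
  induction l using List.reverseRecOn with
  | nil => simp
  | append_singleton l a ih =>
    rw [List.zipIdx_append, List.filter_append, List.length_append, ih]
    rcases Nat.mod_two_eq_zero_or_one l.length with h | h <;> simp [h] <;> omega

section OddEvenElems

variable {l : List α} {y : α}

lemma mem_oddElems :
    y ∈ oddElems l ↔ ∃ (p : ℕ) (hp : p < l.length), l[p] = y ∧ p % 2 = 0 := by
  simp [oddElems, List.mem_zipIdx_iff_getElem?, List.getElem?_eq_some_iff]

lemma mem_evenElems :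
    y ∈ evenElems l ↔ ∃ (p : ℕ) (hp : p < l.length), l[p] = y ∧ p % 2 = 1 := by
  simp [evenElems, List.mem_zipIdx_iff_getElem?, List.getElem?_eq_some_iff]

lemma card_oddElems (hl : l.Nodup) : (oddElems l).card = (l.length + 1) / 2 := by
  rw [oddElems, List.toFinset_card_of_nodup, List.length_map, length_filter_zipIdx_mod_two_eq_zero]
  exact hl.sublist (by simpa using (List.filter_sublist (l := l.zipIdx)).map Prod.fst)

lemma card_evenElems_le : (evenElems l).card ≤ l.length / 2 :=
  (List.toFinset_card_le _).trans_eq <| by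
    rw [List.length_map, length_filter_zipIdx_mod_two_eq_one]

end OddEvenElems

section Augment

variable {S : Finset α} {l : List α} {y : α}

def augment (S : Finset α) (l : List α) : Finset α :=
  (S \ evenElems l) ∪ oddElems l

lemma mem_augment : y ∈ augment S l ↔ y ∈ S ∧ y ∉ evenElems l ∨ y ∈ oddElems l := by
  rw [augment, Finset.mem_union, Finset.mem_sdiff]

lemma mem_augment_iff_of_notMem (hy : y ∉ l) : y ∈ augment S l ↔ y ∈ S := by
  have hyE : y ∉ evenElems l := fun h => by
    obtain ⟨p, hp, rfl, -⟩ := mem_evenElems.mp h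
    exact hy (List.getElem_mem hp)
  have hyO : y ∉ oddElems l := fun h => by
    obtain ⟨p, hp, rfl, -⟩ := mem_oddElems.mp h
    exact hy (List.getElem_mem hp)
  simp [mem_augment, hyE, hyO]

end Augment

def IsAugmentingPath (M₁ M₂ : FinMatroid α) (S : Finset α) (l : List α) : Prop :=
  List.IsChain (egAdj M₁ M₂ S) (EGV.src :: (l.map EGV.el ++ [EGV.snk]))

namespace IsAugmentingPath

variable {M₁ M₂ : FinMatroid α} {S : Finset α} {l : List α} {m : ℕ} {y b : α}

lemma ne_nil (hP : IsAugmentingPath M₁ M₂ S l) : l ≠ [] := by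
  rintro rfl
  exact List.isChain_pair.mp hP

lemma adj_src (hP : IsAugmentingPath M₁ M₂ S l) (h : 0 < l.length) :
    egAdj M₁ M₂ S .src (.el l[0]) := by
  simpa [List.getElem_append_left, h] using List.isChain_iff_getElem.mp hP 0 (by simp)

lemma adj_succ (hP : IsAugmentingPath M₁ M₂ S l) (p : ℕ) (h : p + 1 < l.length) :
    egAdj M₁ M₂ S (.el l[p]) (.el l[p + 1]) := by
  simpa [List.getElem_append_left, h, show p < l.length by omega] using
    List.isChain_iff_getElem.mp hP (p + 1) (by simp; omega)

lemma adj_snk (hP : IsAugmentingPath M₁ M₂ S l) (hm : l.length = m + 1) :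
    egAdj M₁ M₂ S (.el l[m]) .snk := by
  simpa [List.getElem_append_left, List.getElem_append_right, hm] using
    List.isChain_iff_getElem.mp hP (m + 1) (by simp; omega)

lemma getElem_mem_iff (hP : IsAugmentingPath M₁ M₂ S l) :
    ∀ (p : ℕ) (hp : p < l.length), l[p] ∈ S ↔ p % 2 = 1
  | 0, hp => by simpa using (hP.adj_src hp).1
  | p + 1, hp => by
    have ih := hP.getElem_mem_iff p (by omega)
    rcases hP.adj_succ p hp with ⟨hx, hy, -⟩ | ⟨hx, hy, -⟩ <;> simp_all <;> omega

lemma getElem_notMem (hP : IsAugmentingPath M₁ M₂ S l) (hm : l.length = m + 1) : l[m] ∉ S :=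
  (hP.adj_snk hm).1

lemma egDist_src_getElem_le (hP : IsAugmentingPath M₁ M₂ S l) :
    ∀ (p : ℕ) (hp : p < l.length), egDist M₁ M₂ S .src (.el l[p]) ≤ p + 1
  | 0, hp => by simpa using egDist_le_one_of_adj (hP.adj_src hp)
  | p + 1, hp => by
    push_cast
    exact (egDist_le_add_one_of_adj (hP.adj_succ p hp)).trans
      (by gcongr; exact hP.egDist_src_getElem_le p (by omega))

lemma egDist_getElem_snk_le (hP : IsAugmentingPath M₁ M₂ S l) :
    ∀ (q p : ℕ) (hp : p + q + 1 = l.length),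
      egDist M₁ M₂ S (.el (l[p]'(by omega))) .snk ≤ q + 1
  | 0, p, hp => by simpa using egDist_le_one_of_adj (hP.adj_snk hp.symm)
  | q + 1, p, hp =>
    calc egDist M₁ M₂ S (.el l[p]) .snk
        ≤ egDist M₁ M₂ S (.el l[p]) (.el l[p + 1]) + egDist M₁ M₂ S (.el l[p + 1]) .snk :=
          egDist_triangle
      _ ≤ 1 + (q + 1) := by
          gcongr
          · exact egDist_le_one_of_adj (hP.adj_succ p (by omega))
          · exact hP.egDist_getElem_snk_le q (p + 1) (by omega)
      _ = ((q + 1 : ℕ) : ℕ∞) + 1 := by push_cast; ring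

lemma egDist_src_getElem (hP : IsAugmentingPath M₁ M₂ S l)
    (hshort : egDist M₁ M₂ S .src .snk = l.length + 1)
    (p : ℕ) (hp : p < l.length) : egDist M₁ M₂ S .src (.el l[p]) = p + 1 := by
  refine le_antisymm (hP.egDist_src_getElem_le p hp) ?_
  have := hshort ▸ (egDist_triangle (v := .el l[p])).trans
    (add_le_add_right (hP.egDist_getElem_snk_le (l.length - p - 1) p (by omega)) _)
  generalize egDist M₁ M₂ S .src (.el l[p]) = d at this
  induction d using ENat.recTopCoe with
  | top => exact le_top
  | coe d => norm_cast at this ⊢; omega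

lemma nodup (hP : IsAugmentingPath M₁ M₂ S l)
    (hshort : egDist M₁ M₂ S .src .snk = l.length + 1) : l.Nodup :=
  List.nodup_iff_injective_getElem.mpr fun i j hij => Fin.ext <| by
    have hi := hP.egDist_src_getElem hshort i i.2
    simp only at hij
    rw [hij, hP.egDist_src_getElem hshort j j.2] at hi
    exact Nat.succ_injective (by exact_mod_cast hi.symm)

lemma card_lt_card_augment (hP : IsAugmentingPath M₁ M₂ S l)
    (hshort : egDist M₁ M₂ S .src .snk = l.length + 1) : S.card < (augment S l).card := by
  obtain ⟨m, hm⟩ := Nat.exists_eq_add_one.mpr (List.length_pos_iff.mpr hP.ne_nil)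
  have hodd : m % 2 = 0 := by
    have := (hP.getElem_mem_iff m (by omega)).not.mp (hP.getElem_notMem hm)
    omega
  have hES : evenElems l ⊆ S := fun y hy => by
    obtain ⟨p, hp, rfl, hpar⟩ := mem_evenElems.mp hy
    exact (hP.getElem_mem_iff p hp).mpr hpar
  have hdisj : Disjoint (S \ evenElems l) (oddElems l) :=
    Finset.disjoint_left.mpr fun y hy hyO => by
      obtain ⟨p, hp, rfl, hpar⟩ := mem_oddElems.mp hyO
      have := (hP.getElem_mem_iff p hp).mp (Finset.mem_sdiff.mp hy).1
      omega
  rw [augment, Finset.card_union_of_disjoint hdisj, Finset.card_sdiff_of_subset hES,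
    card_oddElems (hP.nodup hshort)]
  have := card_evenElems_le (l := l)
  have := Finset.card_le_card hES
  omega

lemma egDist_src_le_of_mem (hP : IsAugmentingPath M₁ M₂ S l) (hm : l.length = m + 1)
    (hy : y ∈ l) : egDist M₁ M₂ S .src (.el y) ≤ m + 1 := by
  obtain ⟨p, hp, rfl⟩ := List.getElem_of_mem hy
  exact (hP.egDist_src_getElem_le p hp).trans (by exact_mod_cast (by omega : p + 1 ≤ m + 1))

lemma egDist_src_getElem_le_of_ne (hP : IsAugmentingPath M₁ M₂ S l) (hm : l.length = m + 1)
    (p : ℕ) (hp : p < l.length) (hpm : p ≠ m) : egDist M₁ M₂ S .src (.el l[p]) ≤ m :=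
  (hP.egDist_src_getElem_le p hp).trans (by exact_mod_cast (by omega : p + 1 ≤ m))

lemma egDist_src_le_of_mem_sdiff_augment (hP : IsAugmentingPath M₁ M₂ S l)
    (hm : l.length = m + 1) (hyS : y ∈ S) (hy : y ∉ augment S l) :
    egDist M₁ M₂ S .src (.el y) ≤ m := by
  have hyE : y ∈ evenElems l := by
    by_contra h
    exact hy (mem_augment.mpr (Or.inl ⟨hyS, h⟩))
  obtain ⟨p, hp, rfl, -⟩ := mem_evenElems.mp hyE
  refine hP.egDist_src_getElem_le_of_ne hm p hp ?_
  rintro rfl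
  exact hP.getElem_notMem hm hyS

lemma egDist_src_le_of_mem_augment_sdiff (hP : IsAugmentingPath M₁ M₂ S l)
    (hm : l.length = m + 1) (hy : y ∈ augment S l) (hyS : y ∉ S) (hym : y ≠ l[m]) :
    egDist M₁ M₂ S .src (.el y) ≤ m := by
  obtain ⟨p, hp, rfl, -⟩ := mem_oddElems.mp ((mem_augment.mp hy).resolve_left fun h => hyS h.1)
  refine hP.egDist_src_getElem_le_of_ne hm p hp ?_
  rintro rfl
  exact hym rfl

lemma egDist_src_le_of_adj_src_augment (hS₁ : M₁.Indep S) (hP : IsAugmentingPath M₁ M₂ S l)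
    (hm : l.length = m + 1) (h : egAdj M₁ M₂ (augment S l) .src (.el b)) :
    egDist M₁ M₂ S .src (.el b) ≤ m + 1 := by
  by_cases hbl : b ∈ l
  · exact hP.egDist_src_le_of_mem hm hbl
  refine egDist_src_le_of_indep₁ hS₁ ((mem_augment_iff_of_notMem hbl).not.mp h.1) h.2
    (Finset.mem_insert_self _ _) fun z hzS hzT => ?_
  exact hP.egDist_src_le_of_mem_sdiff_augment hm hzS fun hz => hzT (Finset.mem_insert_of_mem hz)

lemma egDist_src_le_of_adj_augment (hS₁ : M₁.Indep S) (hS₂ : M₂.Indep S)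
    (hP : IsAugmentingPath M₁ M₂ S l) (hshort : egDist M₁ M₂ S .src .snk = l.length + 1)
    (hm : l.length = m + 1) {x : α} (hx : egDist M₁ M₂ S .src (.el x) ≤ m)
    (h : egAdj M₁ M₂ (augment S l) (.el x) (.el b)) :
    egDist M₁ M₂ S .src (.el b) ≤ m + 1 := by
  by_cases hbl : b ∈ l
  · exact hP.egDist_src_le_of_mem hm hbl
  have hbS := mem_augment_iff_of_notMem (S := S) hbl
  rcases h with ⟨-, hb, h⟩ | ⟨hx', hb, h⟩
  · refine egDist_src_le_of_indep₁ hS₁ (hbS.not.mp hb) h (Finset.mem_insert_self _ _)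
      fun z hzS hzT => ?_
    by_cases hzx : z = x
    · exact hzx ▸ hx
    exact hP.egDist_src_le_of_mem_sdiff_augment hm hzS fun hz =>
      hzT (Finset.mem_insert_of_mem (Finset.mem_erase.mpr ⟨hzx, hz⟩))
  · have hbT : b ∉ insert x ((augment S l).erase b) := by
      rw [Finset.mem_insert, not_or]
      exact ⟨by rintro rfl; exact hx' hb, Finset.notMem_erase b _⟩
    have hcard : S.card < (insert x ((augment S l).erase b)).card := by
      rw [Finset.card_insert_of_notMem fun h => hx' (Finset.mem_of_mem_erase h),
        Finset.card_erase_add_one hb]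
      exact hP.card_lt_card_augment hshort
    refine egDist_src_le_of_indep₂ hS₂ (hbS.mp hb) h hbT hcard l[m] fun z hzT hzS hzm => ?_
    rcases Finset.mem_insert.mp hzT with rfl | hz
    · exact hx
    · exact hP.egDist_src_le_of_mem_augment_sdiff hm (Finset.mem_of_mem_erase hz) hzS hzm

lemma egDist_le_of_egDist_augment_le (hS₁ : M₁.Indep S) (hS₂ : M₂.Indep S)
    (hP : IsAugmentingPath M₁ M₂ S l) (hshort : egDist M₁ M₂ S .src .snk = l.length + 1)
    (hm : l.length = m + 1)
    (hmono : ∀ a : α, egDist M₁ M₂ S .src (.el a) < egDist M₁ M₂ S .src .snk →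
      egDist M₁ M₂ S .src (.el a) ≤ egDist M₁ M₂ (augment S l) .src (.el a)) :
    ∀ k ≤ m + 1, ∀ b : α, egDist M₁ M₂ (augment S l) .src (.el b) ≤ k →
      egDist M₁ M₂ S .src (.el b) ≤ k
  | 0, _, b, hb => absurd (one_le_egDist.trans hb) (by simp)
  | k + 1, hk, b, hb => by
    have hnear : egDist M₁ M₂ S .src (.el b) ≤ m + 1 := by
      rcases adj_or_exists_adj_of_egDist_le hb with h | ⟨_ | _ | x, hx, h⟩
      · exact hP.egDist_src_le_of_adj_src_augment hS₁ hm h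
      · exact hP.egDist_src_le_of_adj_src_augment hS₁ hm h
      · exact h.elim
      · have := egDist_le_of_egDist_augment_le hS₁ hS₂ hP hshort hm hmono k (by omega) x hx
        exact hP.egDist_src_le_of_adj_augment hS₁ hS₂ hshort hm
          (this.trans (by exact_mod_cast (by omega : k ≤ m))) h
    refine (hmono b (hnear.trans_lt ?_)).trans hb
    rw [hshort, hm, Nat.cast_add_one]
    exact ENat.lt_add_one_iff (by simp) |>.mpr le_rfl

end IsAugmentingPath

/-- Second part of the monotonicity lemma: if `S'` is obtained from `S` by augmenting along a
shortest `s`–`t` path in `G(S)`, then every `a` with `d_{G(S)}(s,a) ≥ d_{G(S)}(s,t)`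
satisfies `d_{G(S')}(s,a) ≥ d_{G(S)}(s,t)`. The first part of the monotonicity lemma is
assumed as hypothesis `hmono`. -/
theorem monotonicity_second_part (M₁ M₂ : FinMatroid α) (S S' : Finset α) (l : List α)
    (hS₁ : M₁.Indep S) (hS₂ : M₂.Indep S)
    (hchain : List.Chain' (egAdj M₁ M₂ S) (EGV.src :: (l.map EGV.el ++ [EGV.snk])))
    (hshort : egDist M₁ M₂ S EGV.src EGV.snk = ((l.length : ℕ) : ℕ∞) + 1)
    (hS' : S' = (S \ evenElems l) ∪ oddElems l)
    (hmono : ∀ a : α,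
      egDist M₁ M₂ S EGV.src (EGV.el a) < egDist M₁ M₂ S EGV.src EGV.snk →
      egDist M₁ M₂ S EGV.src (EGV.el a) ≤ egDist M₁ M₂ S' EGV.src (EGV.el a)) :
    ∀ a : α,
      egDist M₁ M₂ S EGV.src EGV.snk ≤ egDist M₁ M₂ S EGV.src (EGV.el a) →
      egDist M₁ M₂ S EGV.src EGV.snk ≤ egDist M₁ M₂ S' EGV.src (EGV.el a) := by
  subst hS'
  have hP : IsAugmentingPath M₁ M₂ S l := hchain
  obtain ⟨m, hm⟩ := Nat.exists_eq_add_one.mpr (List.length_pos_iff.mpr hP.ne_nil)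
  intro a hfar
  by_contra hnear
  rw [not_le, hshort, hm, ENat.lt_add_one_iff (ENat.natCast_ne_top _)] at hnear
  have h := hfar.trans
    (hP.egDist_le_of_egDist_augment_le hS₁ hS₂ hshort hm hmono (m + 1) le_rfl a hnear)
  rw [hshort, hm] at h
  norm_cast at h
  omega
end
end
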